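/- arXiv:2602.01042 — 2 statements merged into one kernel-verified Lean document; each statement's English description precedes it below -/
import Mathlib

section
/- Let ρ be a restriction of the base Rubinstein-type function g on k² variables leaving m variables free, such that g|_ρ is not constant. Then the 0-block-sensitivity satisfies bs₀(g|_ρ) ≤ max(1, m/k). -/
section Defs
variable {I : Type*} [Fintype I] [DecidableEq I]

/-- Flip a single bit of the input. -/
def flipOne (i : I) (x : I → Bool) : I → Bool := Function.update x i (!x i)

/-- Flip all bits in the block `B`. -/
def flipSet (B : Finset I) (x : I → Bool) : I → Bool := fun j => if j ∈ B then !x j else x j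

/-- Sensitivity of `f` at `x`: the number of coordinates whose flip changes the value. -/
def sensAt (f : (I → Bool) → Bool) (x : I → Bool) : ℕ :=
  (Finset.univ.filter fun i => f (flipOne i x) ≠ f x).card

/-- Sensitivity of `f`. -/
noncomputable def sensF (f : (I → Bool) → Bool) : ℕ := sSup (Set.range (sensAt f))

/-- There exist `m` pairwise disjoint sensitive blocks for `f` at `x`. -/
def SensBlocks (f : (I → Bool) → Bool) (x : I → Bool) (m : ℕ) : Prop :=
  ∃ B : Fin m → Finset I, (∀ a b, a ≠ b → Disjoint (B a) (B b)) ∧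
    ∀ a, f (flipSet (B a) x) ≠ f x

/-- Block sensitivity of `f`. -/
noncomputable def bsF (f : (I → Bool) → Bool) : ℕ := sSup {m | ∃ x, SensBlocks f x m}

/-- `S` is a certificate for `f` at `x`. -/
def IsCert (f : (I → Bool) → Bool) (x : I → Bool) (S : Finset I) : Prop :=
  ∀ y, (∀ i ∈ S, y i = x i) → f y = f x

/-- Certificate complexity of `f` at `x`. -/
noncomputable def certAt (f : (I → Bool) → Bool) (x : I → Bool) : ℕ :=
  sInf {m | ∃ S : Finset I, IsCert f x S ∧ S.card = m}

/-- Certificate complexity of `f`. -/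
noncomputable def certF (f : (I → Bool) → Bool) : ℕ := sSup (Set.range (certAt f))

/-- Restrict `f` by the partial assignment `ρ`; the result is a function on the
free variables (those with `ρ i = none`). -/
def restrictTo (ρ : I → Option Bool) (f : (I → Bool) → Bool) :
    ({i : I // ρ i = none} → Bool) → Bool :=
  fun y => f fun i => if h : ρ i = none then y ⟨i, h⟩ else (ρ i).getD false

end Defs

/-- The base Rubinstein-type function on `k²` variables: value `1` iff exactly one aligned
contiguous block of `k` variables is all-`1` and all other variables are `0`. -/
def rub (k : ℕ) (x : Fin (k ^ 2) → Bool) : Bool :=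
  decide (∃ j : Fin k, ∀ i : Fin (k ^ 2),
    (x i = true ↔ (j.val * k ≤ i.val ∧ i.val < j.val * k + k)))

/-- The OR of `k²` disjoint copies of the base Rubinstein-type function. -/
def bigRub (k : ℕ) (x : Fin (k ^ 2) × Fin (k ^ 2) → Bool) : Bool :=
  decide (∃ c : Fin (k ^ 2), rub k (fun t => x (c, t)) = true)

/-- Deterministic single-bit decision trees. -/
inductive DTree (I : Type*) : Type _
  | leaf : Bool → DTree I
  | node : I → DTree I → DTree I → DTree I

namespace DTree
variable {I : Type*}

def eval : DTree I → (I → Bool) → Bool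
  | leaf b, _ => b
  | node i t0 t1, x => bif x i then t1.eval x else t0.eval x

def depth : DTree I → ℕ
  | leaf _ => 0
  | node _ t0 t1 => max t0.depth t1.depth + 1

/-- Maximum number of queries answered `0` on a root-to-leaf path. -/
def zeroDepth : DTree I → ℕ
  | leaf _ => 0
  | node _ t0 t1 => max (t0.zeroDepth + 1) t1.zeroDepth

end DTree

/-- AND-decision trees: each node queries the conjunction of a subset of variables. -/
inductive ADTree (I : Type*) : Type _
  | leaf : Bool → ADTree I
  | node : Finset I → ADTree I → ADTree I → ADTree I

namespace ADTree
variable {I : Type*}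

def eval : ADTree I → (I → Bool) → Bool
  | leaf b, _ => b
  | node S t0 t1, x => if ∀ i ∈ S, x i = true then t1.eval x else t0.eval x

def depth : ADTree I → ℕ
  | leaf _ => 0
  | node _ t0 t1 => max t0.depth t1.depth + 1

end ADTree

/-- The 0-query complexity: smallest 0-depth of a decision tree computing `f`. -/
noncomputable def zeroQuery {I : Type*} (f : (I → Bool) → Bool) : ℕ :=
  sInf {d | ∃ T : DTree I, (∀ x, T.eval x = f x) ∧ T.zeroDepth = d}

/-- The AND-query complexity: smallest depth of an AND-decision tree computing `f`. -/
noncomputable def andQuery {I : Type*} (f : (I → Bool) → Bool) : ℕ :=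
  sInf {d | ∃ T : ADTree I, (∀ x, T.eval x = f x) ∧ T.depth = d}

/-- `TRIBES_n`: the AND of `n` disjoint ORs of `n` variables each. -/
def tribes (n : ℕ) (x : Fin n × Fin n → Bool) : Bool :=
  decide (∀ i : Fin n, ∃ j : Fin n, x (i, j) = true)


section Stmt8Aux

/-- Indicator of the `j`-th aligned block. -/
def chi (k : ℕ) (j : Fin k) (i : Fin (k ^ 2)) : Bool :=
  decide (j.val * k ≤ i.val ∧ i.val < j.val * k + k)

lemma rub_eq_true_iff (k : ℕ) (X : Fin (k ^ 2) → Bool) :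
    rub k X = true ↔ ∃ j : Fin k, ∀ i, X i = chi k j i := by
  simp only [rub, decide_eq_true_eq, chi]
  constructor
  · rintro ⟨j, h⟩
    refine ⟨j, fun i => ?_⟩
    have hi := h i
    cases hXi : X i
    · rw [hXi] at hi
      simp at hi ⊢
      exact hi
    · rw [hXi] at hi
      simp at hi
      simp [hi]
  · rintro ⟨j, h⟩
    refine ⟨j, fun i => ?_⟩
    rw [h i]
    simp [decide_eq_true_eq]

lemma sum_pair_lb {b k : ℕ} (hb : 2 ≤ b) (f : Fin b → ℕ)
    (h : ∀ a c : Fin b, a ≠ c → 2 * k ≤ f a + f c) :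
    b * k ≤ ∑ a, f a := by
  obtain ⟨a0, -, hmin⟩ := Finset.exists_min_image Finset.univ f ⟨⟨0, by omega⟩, Finset.mem_univ _⟩
  by_cases hk0 : k ≤ f a0
  · calc b * k = Finset.univ.card • k := by simp [Finset.card_univ, smul_eq_mul]
      _ ≤ ∑ a, f a := Finset.card_nsmul_le_sum _ _ _
          (fun a _ => le_trans hk0 (hmin a (Finset.mem_univ a)))
  · push_neg at hk0
    have hcard : (Finset.univ.erase a0).card = b - 1 := by
      rw [Finset.card_erase_of_mem (Finset.mem_univ a0), Finset.card_univ, Fintype.card_fin]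
    have hs : ∑ a, f a = f a0 + ∑ a ∈ Finset.univ.erase a0, f a :=
      (Finset.add_sum_erase _ _ (Finset.mem_univ a0)).symm
    have hge : ∀ a ∈ Finset.univ.erase a0, 2 * k - f a0 ≤ f a := by
      intro a ha
      have := h a a0 (Finset.ne_of_mem_erase ha)
      omega
    have h2 : (b - 1) * (2 * k - f a0) ≤ ∑ a ∈ Finset.univ.erase a0, f a := by
      calc (b - 1) * (2 * k - f a0) = (Finset.univ.erase a0).card • (2 * k - f a0) := by
            rw [hcard, smul_eq_mul]
        _ ≤ _ := Finset.card_nsmul_le_sum _ _ _ hge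
    obtain ⟨c, rfl⟩ : ∃ c, b = c + 1 := ⟨b - 1, by omega⟩
    have hc : 1 ≤ c := by omega
    have hu : 2 * k - f a0 = k + (k - f a0) := by omega
    have hq : k - f a0 ≤ c * (k - f a0) := Nat.le_mul_of_pos_left _ (by omega)
    have hexp : c * (k + (k - f a0)) = c * k + c * (k - f a0) := by ring
    rw [hu, show c + 1 - 1 = c from rfl] at h2
    have : (c + 1) * k = c * k + k := by ring
    omega

end Stmt8Aux

/-- for a non-constant restriction of the base Rubinstein-type function with `m`
free variables, the 0-block-sensitivity is at most `max 1 (m / k)`. -/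
theorem stmt8 (k : ℕ) (hk : 2 ≤ k) (ρ : Fin (k ^ 2) → Option Bool)
    (hnc : ∃ x y, restrictTo ρ (rub k) x ≠ restrictTo ρ (rub k) y)
    (x : {i : Fin (k ^ 2) // ρ i = none} → Bool)
    (hx : restrictTo ρ (rub k) x = false)
    (b : ℕ) (hb : SensBlocks (restrictTo ρ (rub k)) x b) :
    b ≤ max 1 (Fintype.card {i : Fin (k ^ 2) // ρ i = none} / k) := by
  rcases le_or_gt b 1 with hb1 | hb2
  · exact le_trans hb1 (le_max_left _ _)
  · have hb2' : 2 ≤ b := hb2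
    obtain ⟨B, hdisj, hsens⟩ := hb
    set X : Fin (k ^ 2) → Bool :=
      fun i => if h : ρ i = none then x ⟨i, h⟩ else (ρ i).getD false with hXdef
    have hXfalse : rub k X = false := hx
    set C : Fin b → Finset (Fin (k ^ 2)) :=
      fun a => (B a).map ⟨Subtype.val, Subtype.val_injective⟩ with hCdef
    have hCmem : ∀ a (i : Fin (k ^ 2)),
        i ∈ C a ↔ ∃ h : ρ i = none, (⟨i, h⟩ : {i : Fin (k ^ 2) // ρ i = none}) ∈ B a := by
      intro a i
      simp only [hCdef, Finset.mem_map, Function.Embedding.coeFn_mk]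
      constructor
      · rintro ⟨⟨v, hv⟩, hs, rfl⟩
        exact ⟨hv, hs⟩
      · rintro ⟨h, hs⟩
        exact ⟨⟨i, h⟩, hs, rfl⟩
    have hflip : ∀ a, rub k (flipSet (C a) X) = true := by
      intro a
      have hne := hsens a
      rw [hx] at hne
      have heq : restrictTo ρ (rub k) (flipSet (B a) x) = rub k (flipSet (C a) X) := by
        unfold restrictTo
        congr 1
        funext i
        by_cases h : ρ i = none
        · rw [dif_pos h]
          show flipSet (B a) x ⟨i, h⟩ = flipSet (C a) X i
          simp only [flipSet]
          have hXi : X i = x ⟨i, h⟩ := by rw [hXdef]; exact dif_pos h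
          by_cases hmem : (⟨i, h⟩ : {i : Fin (k ^ 2) // ρ i = none}) ∈ B a
          · rw [if_pos hmem, if_pos ((hCmem a i).mpr ⟨h, hmem⟩), hXi]
          · rw [if_neg hmem, if_neg (fun hc => hmem ((hCmem a i).mp hc).2), hXi]
        · rw [dif_neg h]
          show (ρ i).getD false = flipSet (C a) X i
          simp only [flipSet]
          rw [if_neg (fun hc => h ((hCmem a i).mp hc).1)]
          have hXi : X i = (ρ i).getD false := dif_neg h
          rw [hXi]
      rw [heq] at hne
      exact Bool.ne_false_iff.mp hne
    choose j hj using fun a => (rub_eq_true_iff k _).mp (hflip a)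
    have hmemC : ∀ a (i : Fin (k ^ 2)), i ∈ C a ↔ X i ≠ chi k (j a) i := by
      intro a i
      constructor
      · intro hi heq
        have h1 := hj a i
        simp only [flipSet, if_pos hi] at h1
        rw [heq] at h1
        exact (Bool.not_ne_self _) h1
      · intro hne
        by_contra hi
        have h1 := hj a i
        simp only [flipSet, if_neg hi] at h1
        exact hne h1
    have hjne : ∀ a c, a ≠ c → j a ≠ j c := by
      intro a c hac hjac
      have hCeq : C a = C c := by
        ext i
        rw [hmemC, hmemC, hjac]
      have hne : ∃ i, X i ≠ chi k (j a) i := by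
        by_contra hall
        push_neg at hall
        have : rub k X = true := (rub_eq_true_iff k X).mpr ⟨j a, hall⟩
        rw [hXfalse] at this
        exact Bool.false_ne_true this
      obtain ⟨i, hi⟩ := hne
      have hia : i ∈ C a := (hmemC a i).mpr hi
      have hic : i ∈ C c := hCeq ▸ hia
      have hdC : Disjoint (C a) (C c) := (Finset.disjoint_map _).mpr (hdisj a c hac)
      exact Finset.disjoint_left.mp hdC hia hic
    set J : Fin k → Finset (Fin (k ^ 2)) :=
      fun jj => Finset.univ.filter (fun i => jj.val * k ≤ i.val ∧ i.val < jj.val * k + k)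
      with hJdef
    have hJmem : ∀ (jj : Fin k) (i : Fin (k ^ 2)),
        i ∈ J jj ↔ (jj.val * k ≤ i.val ∧ i.val < jj.val * k + k) := by
      intro jj i
      simp [hJdef]
    have hJcard : ∀ jj, (J jj).card = k := by
      intro jj
      have hlt : ∀ m ∈ Finset.Ico (jj.val * k) (jj.val * k + k), m < k ^ 2 := by
        intro m hm
        rw [Finset.mem_Ico] at hm
        have h1 : jj.val + 1 ≤ k := jj.isLt
        have h2 : (jj.val + 1) * k ≤ k * k := Nat.mul_le_mul_right k h1
        have h3 : (jj.val + 1) * k = jj.val * k + k := by ring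
        have h4 : k ^ 2 = k * k := sq k
        omega
      have hJe : J jj = (Finset.Ico (jj.val * k) (jj.val * k + k)).attachFin hlt := by
        ext i
        rw [hJmem, Finset.mem_attachFin, Finset.mem_Ico]
      rw [hJe, Finset.card_attachFin, Nat.card_Ico]
      omega
    have hJdisj : ∀ j1 j2 : Fin k, j1 ≠ j2 → Disjoint (J j1) (J j2) := by
      intro j1 j2 hne
      rw [Finset.disjoint_left]
      intro i hi1 hi2
      rw [hJmem] at hi1 hi2
      have hvne : j1.val ≠ j2.val := fun h => hne (Fin.ext h)
      rcases Nat.lt_or_ge j1.val j2.val with h | h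
      · have h1 : (j1.val + 1) * k ≤ j2.val * k := Nat.mul_le_mul_right k h
        have h2 : (j1.val + 1) * k = j1.val * k + k := by ring
        omega
      · have h0 : j2.val < j1.val := by omega
        have h1 : (j2.val + 1) * k ≤ j1.val * k := Nat.mul_le_mul_right k h0
        have h2 : (j2.val + 1) * k = j2.val * k + k := by ring
        omega
    have hchiJ : ∀ (jj : Fin k) (i : Fin (k ^ 2)), chi k jj i = true ↔ i ∈ J jj := by
      intro jj i
      rw [hJmem]
      simp [chi]
    have hcover : ∀ a c, a ≠ c → ∀ i ∈ J (j a), i ∈ C a ∪ C c := by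
      intro a c hac i hi
      have hchia : chi k (j a) i = true := (hchiJ _ _).mpr hi
      have hchic : chi k (j c) i = false := by
        have hni : i ∉ J (j c) := Finset.disjoint_left.mp (hJdisj _ _ (hjne a c hac)) hi
        cases hv : chi k (j c) i
        · rfl
        · exact absurd ((hchiJ _ _).mp hv) hni
      rw [Finset.mem_union]
      cases hXi : X i
      · left
        rw [hmemC, hXi, hchia]
        simp
      · right
        rw [hmemC, hXi, hchic]
        simp
    have hpair : ∀ a c, a ≠ c → 2 * k ≤ (B a).card + (B c).card := by
      intro a c hac
      have hsub : J (j a) ∪ J (j c) ⊆ C a ∪ C c := by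
        intro i hi
        rw [Finset.mem_union] at hi
        rcases hi with hi | hi
        · exact hcover a c hac i hi
        · rw [Finset.union_comm]
          exact hcover c a (Ne.symm hac) i hi
      calc 2 * k = (J (j a)).card + (J (j c)).card := by rw [hJcard, hJcard]; ring
        _ = (J (j a) ∪ J (j c)).card :=
            (Finset.card_union_of_disjoint (hJdisj _ _ (hjne a c hac))).symm
        _ ≤ (C a ∪ C c).card := Finset.card_le_card hsub
        _ ≤ (C a).card + (C c).card := Finset.card_union_le _ _
        _ = (B a).card + (B c).card := by simp [hCdef]
    have hsum : b * k ≤ ∑ a, (B a).card :=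
      sum_pair_lb hb2' (fun a => (B a).card) hpair
    have hm : ∑ a, (B a).card ≤ Fintype.card {i : Fin (k ^ 2) // ρ i = none} := by
      rw [← Finset.card_biUnion (fun a _ c _ h => hdisj a c h)]
      rw [← Finset.card_univ]
      exact Finset.card_le_card (Finset.subset_univ _)
    have hk0 : 0 < k := by omega
    have hbd : b ≤ Fintype.card {i : Fin (k ^ 2) // ρ i = none} / k :=
      (Nat.le_div_iff_mul_le hk0).mpr (le_trans hsum hm)
    exact le_trans hbd (le_max_right _ _)
end

section
/- Define f on k⁴ variables as the OR of k² disjoint copies of the base Rubinstein-type function g on k² variables each. Then the block sensitivity of f at the all-zeros input equals k³. -/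
lemma block_lt (k : ℕ) (hk : 0 < k) (j : Fin k) : j.val * k + k ≤ k ^ 2 := by
  have : (j.val + 1) * k ≤ k * k := Nat.mul_le_mul_right k j.isLt
  nlinarith [sq_nonneg k]

lemma bigRub_zero (k : ℕ) (hk : 2 ≤ k) : bigRub k (fun _ => false) = false := by
  have hk0 : 0 < k := by omega
  unfold bigRub rub
  simp only [decide_eq_false_iff_not]
  rintro ⟨c, hc⟩
  rw [decide_eq_true_iff] at hc
  obtain ⟨j, hj⟩ := hc
  have hlt : j.val * k < k ^ 2 := lt_of_lt_of_le (by omega) (block_lt k hk0 j)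
  have := hj ⟨j.val * k, hlt⟩
  simp at this
  omega

lemma bigRub_flip (k : ℕ) (B : Finset (Fin (k^2) × Fin (k^2))) :
    bigRub k (flipSet B (fun _ => false)) = true ↔
      ∃ c : Fin (k^2), ∃ j : Fin k, ∀ i : Fin (k^2),
        ((c, i) ∈ B ↔ j.val * k ≤ i.val ∧ i.val < j.val * k + k) := by
  unfold bigRub rub flipSet
  simp

/-- the block sensitivity of `f` (the OR of `k²` copies of `g`) at the all-zeros
input is exactly `k³`. -/
theorem stmt9 (k : ℕ) (hk : 2 ≤ k) :
    IsGreatest {m | SensBlocks (bigRub k) (fun _ => false) m} (k ^ 3) := by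
  have hk0 : 0 < k := by omega
  have hz := bigRub_zero k hk
  constructor
  · -- membership: k^3 disjoint sensitive blocks
    refine ⟨fun a => Finset.univ.filter (fun p : Fin (k^2) × Fin (k^2) =>
        p.1.val = a.val / k ∧ (a.val % k) * k ≤ p.2.val ∧ p.2.val < (a.val % k) * k + k),
      ?_, ?_⟩
    · intro a b hab
      rw [Finset.disjoint_left]
      intro p hpa hpb
      simp only [Finset.mem_filter] at hpa hpb
      obtain ⟨-, h1, h2, h3⟩ := hpa
      obtain ⟨-, h4, h5, h6⟩ := hpb
      have hd : a.val / k = b.val / k := by omega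
      have hm : a.val % k = b.val % k := by
        by_contra hne
        rcases Nat.lt_or_ge (a.val % k) (b.val % k) with h | h
        · have : (a.val % k + 1) * k ≤ (b.val % k) * k := Nat.mul_le_mul_right k h
          nlinarith
        · have h' : b.val % k < a.val % k := by omega
          have : (b.val % k + 1) * k ≤ (a.val % k) * k := Nat.mul_le_mul_right k h'
          nlinarith
      apply hab
      have e1 := Nat.div_add_mod a.val k
      have e2 := Nat.div_add_mod b.val k
      have e3 : k * (a.val / k) = k * (b.val / k) := by rw [hd]
      exact Fin.ext (by omega)
    · intro a
      rw [hz, ne_eq, Bool.not_eq_false, bigRub_flip]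
      have hdk : a.val / k < k ^ 2 := by
        have h1 : a.val < k * k ^ 2 := by
          have h2 := a.isLt
          have h3 : k ^ 3 = k * k ^ 2 := by ring
          omega
        exact Nat.div_lt_of_lt_mul h1
      have hmk : a.val % k < k := Nat.mod_lt _ hk0
      refine ⟨⟨a.val / k, hdk⟩, ⟨a.val % k, hmk⟩, fun i => ?_⟩
      simp
  · -- upper bound
    rintro m ⟨B, hdisj, hsens⟩
    have key : ∀ a, ∃ cj : Fin (k^2) × Fin k, ∀ i : Fin (k^2),
        ((cj.1, i) ∈ B a ↔ cj.2.val * k ≤ i.val ∧ i.val < cj.2.val * k + k) := by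
      intro a
      have := hsens a
      rw [hz, ne_eq, Bool.not_eq_false, bigRub_flip] at this
      obtain ⟨c, j, h⟩ := this
      exact ⟨(c, j), h⟩
    choose F hF using key
    have hinj : Function.Injective F := by
      intro a b hab
      by_contra hne
      have hd := hdisj a b hne
      rw [Finset.disjoint_left] at hd
      have hlt : (F a).2.val * k < k ^ 2 :=
        lt_of_lt_of_le (by omega) (block_lt k hk0 (F a).2)
      have h1 : (F a).1 = (F b).1 := by rw [hab]
      have h2 : (F a).2 = (F b).2 := by rw [hab]
      have hma : ((F a).1, (⟨(F a).2.val * k, hlt⟩ : Fin (k^2))) ∈ B a :=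
        (hF a _).mpr (by simp only [Fin.val_mk]; omega)
      have hmb : ((F b).1, (⟨(F a).2.val * k, hlt⟩ : Fin (k^2))) ∈ B b :=
        (hF b _).mpr (by rw [← h2]; simp only [Fin.val_mk]; omega)
      rw [← h1] at hmb
      exact hd hma hmb
    calc m = Fintype.card (Fin m) := (Fintype.card_fin m).symm
      _ ≤ Fintype.card (Fin (k^2) × Fin k) := Fintype.card_le_of_injective F hinj
      _ = k ^ 3 := by simp [pow_succ, pow_two]
end
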